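/- arXiv:1510.00177 — 10 statements merged into one kernel-verified Lean document; each statement's English description precedes it below -/
import Mathlib

section
/- Let D ⊆ ℤ^d be a finite set whose cardinality p is a prime, and let C ⊆ ℤ^d satisfy D ⊕ C = ℤ^d (every element of ℤ^d is uniquely expressible as a sum of an element of D and an element of C). Then for all u, v ∈ D, the set C is invariant under translation by p·(v − u); in particular, if D has at least two elements, C is periodic with some nonzero period. -/
/-!
Over `𝔽_p`, let `a` be the sum of the point masses at the elements of `D`. Convolving `a` with the
indicator `χ` of `C` gives the constant `1` (each point is covered exactly once), and convolving
`a` with `1` gives the constant `|D| = p = 0`; hence `a ^ p * χ = 0`. By Frobenius,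
`a ^ p = ∑_{u ∈ D} δ_{p u}`, so for every `w` the number of `u ∈ D` with `w - p u ∈ C` is divisible
by `p`. Being at most `|D| = p`, it is `0` or `p`, i.e. `w - p u ∈ C` holds for one `u ∈ D` only if it
holds for all of them.
-/

open AddMonoidAlgebra

section Convolution

variable {G : Type*} [AddCommGroup G] (R : Type*) [CommRing R]

def translationEnd : Multiplicative G →* Module.End R (G → R) where
  toFun g :=
    { toFun := fun f w => f (w - g.toAdd)
      map_add' _ _ := rfl
      map_smul' _ _ := rfl }
  map_one' := by
    ext f w
    simp
  map_mul' g h := by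
    ext f w
    simp [sub_sub]

noncomputable def convolutionEnd : R[G] →ₐ[R] Module.End R (G → R) :=
  lift R (Module.End R (G → R)) G (translationEnd R)

variable {R}

theorem convolutionEnd_single_apply (g : G) (r : R) (f : G → R) (w : G) :
    convolutionEnd R (single g r) f w = r * f (w - g) := by
  simp [convolutionEnd, lift_single, translationEnd]

theorem convolutionEnd_sum_single_one_apply {ι : Type*} (S : Finset ι) (g : ι → G) (f : G → R)
    (w : G) : convolutionEnd R (∑ i ∈ S, single (g i) 1) f w = ∑ i ∈ S, f (w - g i) := by
  simp [map_sum, convolutionEnd_single_apply]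

theorem sum_single_one_pow_char (p : ℕ) [Fact p.Prime] [CharP R p] {ι : Type*} (S : Finset ι)
    (g : ι → G) : (∑ i ∈ S, single (g i) (1 : R)) ^ p = ∑ i ∈ S, single (p • g i) 1 := by
  have : CharP R[G] p := charP_of_injective_algebraMap' R p
  simp [sum_pow_char, single_pow]

end Convolution

section Tiling

open Finset

variable {G : Type*} [AddCommGroup G] {D : Finset G} {C : Set G}

open scoped Classical in
theorem card_filter_sub_mem_eq_one
    (htile : ∀ w : G, ∃! q : G × G, q.1 ∈ D ∧ q.2 ∈ C ∧ q.1 + q.2 = w) (w : G) :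
    #{u ∈ D | w - u ∈ C} = 1 := by
  obtain ⟨⟨u₀, c₀⟩, ⟨hu₀, hc₀, hw⟩, huniq⟩ := htile w
  rw [card_eq_one]
  refine ⟨u₀, ext fun u => ⟨fun hu => ?_, fun hu => ?_⟩⟩
  · obtain ⟨huD, huC⟩ := mem_filter.mp hu
    simpa using congrArg Prod.fst (huniq (u, w - u) ⟨huD, huC, add_sub_cancel u w⟩)
  · rw [mem_singleton.mp hu, mem_filter, ← hw, add_sub_cancel_left]
    exact ⟨hu₀, hc₀⟩

open scoped Classical in
theorem card_dvd_card_filter_sub_nsmul_mem (hp : (#D).Prime)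
    (hcover : ∀ w, #{u ∈ D | w - u ∈ C} = 1) (w : G) :
    #D ∣ #{u ∈ D | w - #D • u ∈ C} := by
  set p := #D
  have : Fact p.Prime := ⟨hp⟩
  set a : (ZMod p)[G] := ∑ u ∈ D, single u 1
  set χ : G → ZMod p := fun x => if x ∈ C then 1 else 0
  have ha_χ : convolutionEnd (ZMod p) a χ = 1 := by
    ext w
    rw [convolutionEnd_sum_single_one_apply]
    simp [χ, sum_boole, hcover]
  have ha_one : convolutionEnd (ZMod p) a 1 = 0 := by
    ext w
    rw [convolutionEnd_sum_single_one_apply]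
    simp [p]
  have hap_χ : convolutionEnd (ZMod p) (a ^ p) χ = 0 := by
    have hp1 : p - 1 ≠ 0 := by have := hp.two_le; omega
    rw [← pow_sub_one_mul hp.ne_zero, ← pow_sub_one_mul hp1, map_mul, map_mul,
      Module.End.mul_apply, ha_χ, Module.End.mul_apply, ha_one, map_zero]
  have := congrFun hap_χ w
  rw [sum_single_one_pow_char, convolutionEnd_sum_single_one_apply] at this
  simpa [χ, sum_boole, ZMod.natCast_eq_zero_iff] using this

open scoped Classical in
theorem sub_nsmul_mem_of_sub_nsmul_mem (hp : (#D).Prime)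
    (hcover : ∀ w, #{u ∈ D | w - u ∈ C} = 1) {w u v : G} (hu : u ∈ D) (hv : v ∈ D)
    (huC : w - #D • u ∈ C) : w - #D • v ∈ C := by
  have hdvd := card_dvd_card_filter_sub_nsmul_mem hp hcover w
  have hpos : 0 < #{u ∈ D | w - #D • u ∈ C} := card_pos.mpr ⟨u, mem_filter.mpr ⟨hu, huC⟩⟩
  have hfilter : {u ∈ D | w - #D • u ∈ C} = D :=
    eq_of_subset_of_card_le (filter_subset _ _) (Nat.le_of_dvd hpos hdvd)
  rw [← hfilter] at hv
  exact (mem_filter.mp hv).2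

open scoped Classical in
theorem mem_iff_add_card_smul_sub_mem (hp : (#D).Prime)
    (hcover : ∀ w, #{u ∈ D | w - u ∈ C} = 1) {u v : G} (hu : u ∈ D) (hv : v ∈ D) (x : G) :
    x ∈ C ↔ x + (#D : ℤ) • (v - u) ∈ C := by
  have hx : x + (#D : ℤ) • (v - u) = (x + #D • v) - #D • u := by
    rw [smul_sub, natCast_zsmul, natCast_zsmul]
    abel
  rw [hx]
  constructor
  · intro hxC
    exact sub_nsmul_mem_of_sub_nsmul_mem hp hcover hv hu (by rwa [add_sub_cancel_right])
  · intro hxC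
    simpa using sub_nsmul_mem_of_sub_nsmul_mem hp hcover hu hv hxC

end Tiling

/-- If `|D|` is prime and `D ⊕ C = ℤ^d`, then `C` is invariant under translation
by `|D|·(v-u)` for all `u, v ∈ D`; in particular if `|D| ≥ 2` then `C` is periodic. -/
theorem stmt_3 (d : ℕ) (D : Finset (Fin d → ℤ)) (C : Set (Fin d → ℤ))
    (hp : D.card.Prime)
    (htile : ∀ w : Fin d → ℤ,
      ∃! q : (Fin d → ℤ) × (Fin d → ℤ), q.1 ∈ D ∧ q.2 ∈ C ∧ q.1 + q.2 = w) :
    (∀ u ∈ D, ∀ v ∈ D, ∀ x : Fin d → ℤ, x ∈ C ↔ x + (D.card : ℤ) • (v - u) ∈ C) ∧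
    (2 ≤ D.card → ∃ t : Fin d → ℤ, t ≠ 0 ∧ ∀ x : Fin d → ℤ, x ∈ C ↔ x + t ∈ C) := by
  have hperiodic : ∀ u ∈ D, ∀ v ∈ D, ∀ x, x ∈ C ↔ x + (D.card : ℤ) • (v - u) ∈ C :=
    fun _ hu _ hv => mem_iff_add_card_smul_sub_mem hp (card_filter_sub_mem_eq_one htile) hu hv
  refine ⟨hperiodic, fun h2 => ?_⟩
  obtain ⟨u, hu, v, hv, huv⟩ := Finset.one_lt_card.mp h2
  have hp0 : (D.card : ℤ) ≠ 0 := by exact_mod_cast hp.ne_zero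
  exact ⟨_, smul_ne_zero hp0 (sub_ne_zero.mpr huv.symm), hperiodic u hu v hv⟩
end

section
/- Let c : ℤ^d → ℤ be a configuration taking finitely many values, and let f be a nonzero integer Laurent polynomial annihilating c (i.e., the convolution f * c = 0). Then there exists a positive integer r such that for every positive integer n coprime to r, the polynomial f(X^n) (obtained by replacing exponent vectors v by nv) also annihilates c. -/
/-!
If `f` annihilates `c`, then modulo a prime `p` so does `f ^ p`, which by Frobenius is
`f(X^p)`. Hence the integer configuration `f(X^p) c` is divisible by `p`; it is also bounded by
`B = ‖f‖₁ · max |c|` independently of `p`, so it vanishes as soon as `p > B`. Since `f(X^m)`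
again annihilates `c`, iterating over the prime factors of `n` shows that `f(X^n)` annihilates
`c` whenever `n` is coprime to `r = B!`.
-/

namespace AddMonoidAlgebra

section Action

variable (R : Type*) {G : Type*} [CommSemiring R] [AddCommMonoid G]

-- The paper's `f c`: the monomial `X^v` acts as the translation `c ↦ c (· + v)`.
noncomputable def configAction : R[G] →ₐ[R] Module.End R (G → R) :=
  lift R (Module.End R (G → R)) G
    { toFun := fun v => LinearMap.funLeft R R (· + v.toAdd)
      map_one' := by ext; simp
      map_mul' := fun u v => by
        ext c w; simp [LinearMap.funLeft_apply, add_left_comm, add_comm] }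

variable {R}

theorem configAction_apply (f : R[G]) (c : G → R) (w : G) :
    configAction R f c w = f.coeff.sum fun v a => a * c (w + v) := by
  simp [configAction, lift_apply, Finsupp.sum, LinearMap.funLeft_apply]

theorem configAction_pow_eq_zero {f : R[G]} {c : G → R} (h : configAction R f c = 0) {k : ℕ}
    (hk : k ≠ 0) : configAction R (f ^ k) c = 0 := by
  obtain ⟨k, rfl⟩ := Nat.exists_eq_succ_of_ne_zero hk
  rw [pow_succ, map_mul, Module.End.mul_apply, h, map_zero]

theorem configAction_mapDomain_apply {σ : G → G} (f : R[G]) (c : G → R) (w : G) :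
    configAction R (mapDomain σ f) c w = f.coeff.sum fun v a => a * c (w + σ v) := by
  rw [configAction_apply, coeff_mapDomain]
  exact Finsupp.sum_mapDomain_index (fun _ => zero_mul _) (fun _ _ _ => add_mul _ _ _)

theorem configAction_mapRingHom {S : Type*} [CommSemiring S] (φ : R →+* S) (f : R[G])
    (c : G → R) :
    configAction S (mapRingHom G φ f) (φ ∘ c) = φ ∘ configAction R f c := by
  ext w
  simp [configAction_apply, coe_mapRingHom, Finsupp.sum_mapRange_index, map_finsuppSum]

end Action

theorem mapDomain_nsmul_eq_pow_zmod {G : Type*} [AddCommMonoid G] (p : ℕ) [hp : Fact p.Prime]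
    (f : (ZMod p)[G]) : mapDomain (p • ·) f = f ^ p := by
  have : CharP (ZMod p)[G] p :=
    charP_of_injective_algebraMap (singleZeroRingHom (R := ZMod p) (M := G)).injective p
  induction f using AddMonoidAlgebra.induction with
  | zero => simp [zero_pow hp.out.ne_zero]
  | single_add v a f _ _ ih =>
    rw [add_pow_char, ← ih, mapDomain_add, single_pow, ZMod.pow_card, mapDomain_single]

section Integer

variable {G : Type*} [AddCommMonoid G] {c : G → ℤ} {C : ℤ}

theorem abs_configAction_mapDomain_le (hC : ∀ x, |c x| ≤ C) (σ : G → G) (f : ℤ[G]) (w : G) :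
    |configAction ℤ (mapDomain σ f) c w| ≤ (f.coeff.sum fun _ a => |a|) * C := by
  rw [configAction_mapDomain_apply, Finsupp.sum, Finsupp.sum, Finset.sum_mul]
  refine (Finset.abs_sum_le_sum_abs _ _).trans (Finset.sum_le_sum fun v _ => ?_)
  rw [abs_mul]
  exact mul_le_mul_of_nonneg_left (hC _) (abs_nonneg _)

theorem configAction_mapDomain_prime_mul_nsmul_eq_zero (hC : ∀ x, |c x| ≤ C) {f : ℤ[G]}
    {p : ℕ} (hp : p.Prime) (hpC : (f.coeff.sum fun _ a => |a|) * C < p) {m : ℕ}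
    (h : configAction ℤ (mapDomain (m • ·) f) c = 0) :
    configAction ℤ (mapDomain ((p * m) • ·) f) c = 0 := by
  have : Fact p.Prime := ⟨hp⟩
  set φ := Int.castRingHom (ZMod p)
  have hdilate : mapDomain ((p * m) • ·) f = mapDomain (p • ·) (mapDomain (m • ·) f) := by
    ext1; simp [← Finsupp.mapDomain_comp, Function.comp_def, mul_smul]
  have hfrob : mapRingHom G φ (mapDomain ((p * m) • ·) f) =
      mapRingHom G φ (mapDomain (m • ·) f) ^ p := by
    rw [hdilate, ← mapDomain_nsmul_eq_pow_zmod]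
    ext1; simp [coe_mapRingHom, Finsupp.mapDomain_mapRange]
  have hmod : φ ∘ configAction ℤ (mapDomain ((p * m) • ·) f) c = 0 := by
    rw [← configAction_mapRingHom, hfrob]
    refine configAction_pow_eq_zero ?_ hp.ne_zero
    rw [configAction_mapRingHom, h]
    ext; simp
  ext w
  refine Int.eq_zero_of_abs_lt_dvd ?_ ((abs_configAction_mapDomain_le hC _ f w).trans_lt hpC)
  exact (ZMod.intCast_zmod_eq_zero_iff_dvd _ _).mp (congrFun hmod w)

theorem configAction_mapDomain_nsmul_eq_zero_of_lt_prime (hC : ∀ x, |c x| ≤ C) {f : ℤ[G]}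
    (h : configAction ℤ f c = 0) {n : ℕ} (hn : n ≠ 0)
    (hprime : ∀ p, p.Prime → p ∣ n → (f.coeff.sum fun _ a => |a|) * C < p) :
    configAction ℤ (mapDomain (n • ·) f) c = 0 := by
  induction n using induction_on_primes with
  | zero => exact absurd rfl hn
  | one =>
    convert h
    ext1
    simp only [coeff_mapDomain, one_smul]
    exact Finsupp.mapDomain_id
  | prime_mul p m hp ih =>
    exact configAction_mapDomain_prime_mul_nsmul_eq_zero hC hp (hprime p hp (dvd_mul_right p m))
      (ih (right_ne_zero_of_mul hn) fun q hq hqm => hprime q hq (hqm.mul_left p))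

theorem exists_configAction_mapDomain_nsmul_eq_zero_of_coprime (hc : (Set.range c).Finite)
    {f : ℤ[G]} (h : configAction ℤ f c = 0) :
    ∃ r : ℕ, 0 < r ∧
      ∀ n : ℕ, 0 < n → n.Coprime r → configAction ℤ (mapDomain (n • ·) f) c = 0 := by
  obtain ⟨C, hC⟩ : ∃ C, ∀ x, |c x| ≤ C := by
    obtain ⟨C, hC⟩ := (hc.image (|·|)).bddAbove
    exact ⟨C, fun x => hC ⟨c x, ⟨x, rfl⟩, rfl⟩⟩
  set B := (f.coeff.sum fun _ a => |a|) * C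
  refine ⟨B.toNat.factorial, B.toNat.factorial_pos, fun n hn hcop => ?_⟩
  refine configAction_mapDomain_nsmul_eq_zero_of_lt_prime hC h hn.ne' fun p hp hpn => ?_
  have hpB : B.toNat < p := not_le.1 fun hle =>
    hp.one_lt.ne' (Nat.eq_one_of_dvd_coprimes hcop hpn (Nat.dvd_factorial hp.pos hle))
  exact (Int.self_le_toNat B).trans_lt (by exact_mod_cast hpB)

end Integer

end AddMonoidAlgebra

open AddMonoidAlgebra

theorem stmt_5_general (d : ℕ) (c : (Fin d → ℤ) → ℤ) (hc : (Set.range c).Finite)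
    (f : (Fin d → ℤ) →₀ ℤ)
    (hann : ∀ w : Fin d → ℤ, ∑ v ∈ f.support, f v * c (w + v) = 0) :
    ∃ r : ℕ, 0 < r ∧ ∀ n : ℕ, 0 < n → n.Coprime r →
      ∀ w : Fin d → ℤ, ∑ v ∈ f.support, f v * c (w + n • v) = 0 := by
  have h : configAction ℤ (ofCoeff f) c = 0 :=
    funext fun w => (configAction_apply _ c w).trans (hann w)
  obtain ⟨r, hr, hdilate⟩ := exists_configAction_mapDomain_nsmul_eq_zero_of_coprime hc h
  exact ⟨r, hr, fun n hn hnr w =>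
    (configAction_mapDomain_apply _ c w).symm.trans (congrFun (hdilate n hn hnr) w)⟩

/-- For a finitary integral configuration annihilated by nonzero `f`, there is `r`
such that `f(X^n)` annihilates `c` for all positive `n` coprime to `r`. -/
theorem stmt_5 (d : ℕ) (c : (Fin d → ℤ) → ℤ) (hc : (Set.range c).Finite)
    (f : (Fin d → ℤ) →₀ ℤ) (hf : f ≠ 0)
    (hann : ∀ w : Fin d → ℤ, ∑ v ∈ f.support, f v * c (w + v) = 0) :
    ∃ r : ℕ, 0 < r ∧ ∀ n : ℕ, 0 < n → n.Coprime r →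
      ∀ w : Fin d → ℤ, ∑ v ∈ f.support, f v * c (w + n • v) = 0 :=
  stmt_5_general d c hc f hann
end

section
/- Let c : ℤ^d → ℤ be a finitary configuration annihilated by the nonzero integer Laurent polynomial f with support S, and let the prime p exceed c_max · Σ_{v∈S} |a_v|, where c_max is the maximum absolute value of c and a_v are the coefficients of f. Then f(X^p) annihilates c. -/
/-!
Reduce modulo `p`. In the group algebra `𝔽_p[ℤ^d]`, which acts on configurations by translation,
the Frobenius gives `f ^ p = f(X^p)`; since `f` annihilates `c mod p`, so does `f ^ p`. Hence every
sum `Σ_v a_v c(w + p v)` is an integer divisible by `p` of absolute value at most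
`c_max · Σ_v |a_v| < p`, so it vanishes.
-/

namespace AddMonoidAlgebra

variable {R G : Type*} [CommSemiring R] [AddCommMonoid G]

def translationHom : Multiplicative G →* Module.End R (G → R) where
  toFun v := LinearMap.funLeft R R (· + v.toAdd)
  map_one' := by ext φ w; simp [LinearMap.funLeft]
  map_mul' v₁ v₂ := by ext φ w; simp [LinearMap.funLeft, add_assoc]

/-- `translationAction g φ w = Σ_v g_v φ (w + v)`, so `g` annihilates `φ` iff
`translationAction g φ = 0`. -/
noncomputable def translationAction : R[G] →ₐ[R] Module.End R (G → R) :=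
  lift R (Module.End R (G → R)) G translationHom

theorem translationAction_single (v : G) (a : R) (φ : G → R) (w : G) :
    translationAction (single v a) φ w = a * φ (w + v) := by
  simp [translationAction, lift_apply, translationHom, LinearMap.funLeft]

theorem translationAction_pow_apply_eq_zero {g : R[G]} {φ : G → R}
    (h : translationAction g φ = 0) {n : ℕ} (hn : n ≠ 0) : translationAction (g ^ n) φ = 0 := by
  obtain ⟨n, rfl⟩ := Nat.exists_eq_succ_of_ne_zero hn
  rw [map_pow, pow_succ, Module.End.mul_apply, h, map_zero]

theorem sum_single_pow_char (p : ℕ) [ExpChar R p] {ι : Type*} (s : Finset ι) (v : ι → G)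
    (a : ι → R) : (∑ i ∈ s, single (v i) (a i)) ^ p = ∑ i ∈ s, single (p • v i) (a i ^ p) := by
  have : ExpChar R[G] p :=
    expChar_of_injective_algebraMap (FaithfulSMul.algebraMap_injective R R[G]) p
  simp only [sum_pow_char, single_pow]

theorem translationAction_sum_single {ι : Type*} (s : Finset ι) (v : ι → G) (a : ι → R)
    (φ : G → R) (w : G) :
    translationAction (∑ i ∈ s, single (v i) (a i)) φ w = ∑ i ∈ s, a i * φ (w + v i) := by
  simp only [map_sum, LinearMap.sum_apply, Finset.sum_apply, translationAction_single]

theorem sum_pow_mul_add_nsmul_eq_zero (p : ℕ) [ExpChar R p] (s : Finset G) (a φ : G → R)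
    (h : ∀ w, ∑ v ∈ s, a v * φ (w + v) = 0) (w : G) :
    ∑ v ∈ s, a v ^ p * φ (w + p • v) = 0 := by
  set g := ∑ v ∈ s, single v (a v)
  have hg : translationAction g φ = 0 := funext fun w => by
    simpa only [g, translationAction_sum_single, Pi.zero_apply] using h w
  have hgp := congr_fun (translationAction_pow_apply_eq_zero hg (expChar_pos R p).ne') w
  rwa [sum_single_pow_char, translationAction_sum_single] at hgp

end AddMonoidAlgebra

theorem abs_sum_mul_le_mul_sum_abs {ι α : Type*} [CommRing α] [LinearOrder α]
    [IsStrictOrderedRing α]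
    (s : Finset ι) (a b : ι → α) {B : α} (hb : ∀ i ∈ s, |b i| ≤ B) :
    |∑ i ∈ s, a i * b i| ≤ B * ∑ i ∈ s, |a i| :=
  calc |∑ i ∈ s, a i * b i| ≤ ∑ i ∈ s, |a i| * |b i| := by
        simpa only [abs_mul] using Finset.abs_sum_le_sum_abs (fun i => a i * b i) s
    _ ≤ ∑ i ∈ s, |a i| * B := by gcongr with i hi; exact hb i hi
    _ = B * ∑ i ∈ s, |a i| := by rw [← Finset.sum_mul, mul_comm]

theorem stmt_6_general (d : ℕ) (c : (Fin d → ℤ) → ℤ)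
    (f : (Fin d → ℤ) →₀ ℤ)
    (hann : ∀ w : Fin d → ℤ, ∑ v ∈ f.support, f v * c (w + v) = 0)
    (cmax : ℤ) (hcmax : ∀ u, |c u| ≤ cmax)
    (p : ℕ) (hp : p.Prime)
    (hgt : cmax * ∑ v ∈ f.support, |f v| < (p : ℤ)) :
    ∀ w : Fin d → ℤ, ∑ v ∈ f.support, f v * c (w + p • v) = 0 := by
  have : Fact p.Prime := ⟨hp⟩
  intro w
  have hdvd : (p : ℤ) ∣ ∑ v ∈ f.support, f v * c (w + p • v) := by
    rw [← ZMod.intCast_zmod_eq_zero_iff_dvd]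
    have hann_mod_p (u) : ∑ v ∈ f.support, (f v : ZMod p) * c (u + v) = 0 := by
      exact_mod_cast congr_arg (Int.cast : ℤ → ZMod p) (hann u)
    simpa only [ZMod.pow_card, Int.cast_sum, Int.cast_mul] using
      AddMonoidAlgebra.sum_pow_mul_add_nsmul_eq_zero p f.support (fun v => (f v : ZMod p))
        (fun u => (c u : ZMod p)) hann_mod_p w
  exact Int.eq_zero_of_abs_lt_dvd hdvd
    ((abs_sum_mul_le_mul_sum_abs _ _ _ fun v _ => hcmax _).trans_lt hgt)

/-- If the prime `p` exceeds `c_max · Σ|a_v|` then `f(X^p)` annihilates `c`. -/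
theorem stmt_6 (d : ℕ) (c : (Fin d → ℤ) → ℤ) (hc : (Set.range c).Finite)
    (f : (Fin d → ℤ) →₀ ℤ) (hf : f ≠ 0)
    (hann : ∀ w : Fin d → ℤ, ∑ v ∈ f.support, f v * c (w + v) = 0)
    (cmax : ℤ) (hcmax : ∀ u, |c u| ≤ cmax)
    (p : ℕ) (hp : p.Prime)
    (hgt : cmax * ∑ v ∈ f.support, |f v| < (p : ℤ)) :
    ∀ w : Fin d → ℤ, ∑ v ∈ f.support, f v * c (w + p • v) = 0 :=
  stmt_6_general d c f hann cmax hcmax p hp hgt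
end

section
/- Let c : ℤ^d → ℤ be a finitary configuration with a nontrivial annihilator f = Σ_{v∈S} a_v X^v (integer coefficients, S = supp f), and let r be an integer such that f(X^n) annihilates c for all n coprime to r. Fix v₀ ∈ S and set g(X) = x₁⋯x_d · Π_{v∈S, v≠v₀} (X^{rv} − X^{rv₀}). Then g(Z) = 0 for every common root Z ∈ ℂ^d of all polynomials in the annihilator ideal Ann(c). -/
/-!
At a common root `Z` with all coordinates nonzero, every Laurent annihilator `Σ a_v X^v` of `c`
vanishes at `Z`: shifting the exponents by a common vector turns it into an honest polynomial
annihilating a translate of `c`, and the shift only contributes a nonzero monomial factor. Applied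
to `f(X^n)` with `n = 1 + k r` this gives `Σ_v (f_v Z^v) (Z^{rv})^k = 0` for every `k ≥ 0`.
Evaluating the same combination on `Π_{v ≠ v₀} (T - Z^{rv})` isolates the term
`f_{v₀} Z^{v₀} Π_{v ≠ v₀} (Z^{rv₀} - Z^{rv})`, which therefore vanishes.
-/

open Finset Polynomial

theorem MvPolynomial.sum_support_coeff_mul_sum_monomial {ι σ R : Type*} [CommSemiring R]
    (s : Finset ι) (E : ι → σ →₀ ℕ) (a : ι → R) (φ : (σ →₀ ℕ) → R) :
    ∑ e ∈ (∑ i ∈ s, monomial (E i) (a i)).support,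
        (∑ i ∈ s, monomial (E i) (a i)).coeff e * φ e = ∑ i ∈ s, a i * φ (E i) := by
  rw [← MvPolynomial.sum_def (b := fun e b => b * φ e), AddMonoidAlgebra.coeff_sum,
    ← Finsupp.sum_finsetSum_index (fun _ => zero_mul _) (fun _ _ _ => add_mul _ _ _)]
  exact sum_congr rfl fun i _ => sum_monomial_eq (zero_mul _)

theorem sum_mul_prod_zpow_eq_zero_of_annihilates {ι σ : Type*} [Fintype σ]
    {c : (σ → ℤ) → ℤ} {Z : σ → ℂ}
    (hZ : ∀ h : MvPolynomial σ ℂ,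
      (∀ w : σ → ℤ, ∑ e ∈ h.support, h.coeff e * (c (w + fun i => (e i : ℤ)) : ℂ) = 0) →
      MvPolynomial.eval Z h = 0)
    (hZ0 : ∀ j, Z j ≠ 0) {s : Finset ι} {a : ι → ℤ} {e : ι → σ → ℤ}
    (hann : ∀ w, ∑ i ∈ s, a i * c (w + e i) = 0) :
    ∑ i ∈ s, (a i : ℂ) * ∏ j, Z j ^ e i j = 0 := by
  obtain ⟨M, hM⟩ := (s.biUnion fun i => univ.image (e i)).bddBelow
  have hMle : ∀ i ∈ s, ∀ j, M ≤ e i j := fun i hi j =>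
    hM (mem_coe.2 (mem_biUnion.2 ⟨i, hi, mem_image_of_mem _ (mem_univ j)⟩))
  set E : ι → σ →₀ ℕ := fun i => Finsupp.equivFunOnFinite.symm fun j => (e i j - M).toNat
  have hE : ∀ i ∈ s, ∀ j, (E i j : ℤ) = e i j - M := fun i hi j =>
    Int.toNat_of_nonneg (sub_nonneg.2 (hMle i hi j))
  have heval := hZ (∑ i ∈ s, MvPolynomial.monomial (E i) (a i : ℂ)) fun w => by
    rw [MvPolynomial.sum_support_coeff_mul_sum_monomial]
    have hshift : ∀ i ∈ s, (w + fun j => (E i j : ℤ)) = (w - fun _ => M) + e i := fun i hi => by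
      funext j
      simp only [Pi.add_apply, Pi.sub_apply, hE i hi j]
      ring
    rw [sum_congr rfl fun i hi => by rw [hshift i hi]]
    exact_mod_cast hann (w - fun _ => M)
  have hmono : ∀ i ∈ s, ∏ j, Z j ^ E i j = (∏ j, Z j ^ e i j) * ∏ j, Z j ^ (-M) := fun i hi => by
    rw [← prod_mul_distrib]
    refine prod_congr rfl fun j _ => ?_
    rw [← zpow_natCast, hE i hi j, sub_eq_add_neg, zpow_add₀ (hZ0 j)]
  simp only [map_sum, MvPolynomial.eval_monomial, Finsupp.prod_fintype _ _ fun j => pow_zero (Z j)]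
    at heval
  rw [sum_congr rfl fun i hi => by rw [hmono i hi, ← mul_assoc], ← sum_mul] at heval
  exact (mul_eq_zero.1 heval).resolve_right (prod_ne_zero_iff.2 fun j _ => zpow_ne_zero _ (hZ0 j))

theorem sum_mul_eval_eq_zero_of_forall_sum_mul_pow_eq_zero {ι R : Type*} [CommSemiring R]
    {s : Finset ι} {a x : ι → R} (h : ∀ k : ℕ, ∑ i ∈ s, a i * x i ^ k = 0) (p : R[X]) :
    ∑ i ∈ s, a i * p.eval (x i) = 0 := by
  induction p using Polynomial.induction_on' with
  | add p q hp hq => simp only [eval_add, mul_add, sum_add_distrib, hp, hq, add_zero]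
  | monomial n b => simp only [eval_monomial, mul_left_comm _ b, ← mul_sum, h n, mul_zero]

theorem exists_eq_of_forall_sum_mul_pow_eq_zero {ι R : Type*} [DecidableEq ι] [CommRing R]
    [IsDomain R] {s : Finset ι} {a x : ι → R} (h : ∀ k : ℕ, ∑ i ∈ s, a i * x i ^ k = 0)
    {i₀ : ι} (hi₀ : i₀ ∈ s) (ha : a i₀ ≠ 0) : ∃ i ∈ s.erase i₀, x i = x i₀ := by
  by_contra! hne
  have hsum := sum_mul_eval_eq_zero_of_forall_sum_mul_pow_eq_zero h
    (∏ j ∈ s.erase i₀, (X - C (x j)))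
  simp only [eval_prod, eval_sub, eval_X, eval_C] at hsum
  rw [sum_eq_single_of_mem i₀ hi₀ fun i hi hii₀ => by
    rw [prod_eq_zero (mem_erase.2 ⟨hii₀, hi⟩) (sub_self _), mul_zero]] at hsum
  exact mul_ne_zero ha (prod_ne_zero_iff.2 fun j hj => sub_ne_zero.2 (hne j hj).symm) hsum

theorem prod_zpow_natCast_mul {σ K : Type*} [Fintype σ] [Field K] (Z : σ → K) (n : ℕ)
    (v : σ → ℤ) :
    ∏ j, Z j ^ ((n : ℤ) * v j) = (∏ j, Z j ^ v j) ^ n := by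
  rw [← prod_pow]
  exact prod_congr rfl fun j _ => by rw [mul_comm, zpow_mul, zpow_natCast]

theorem stmt_8_general (d : ℕ) (c : (Fin d → ℤ) → ℤ)
    (f : (Fin d → ℤ) →₀ ℤ)
    (r : ℕ)
    (hrexp : ∀ n : ℕ, 0 < n → n.Coprime r →
      ∀ w : Fin d → ℤ, ∑ v ∈ f.support, f v * c (w + n • v) = 0)
    (v₀ : Fin d → ℤ) (hv₀ : v₀ ∈ f.support)
    (Z : Fin d → ℂ)
    (hZ : ∀ h : MvPolynomial (Fin d) ℂ,
      (∀ w : Fin d → ℤ,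
        ∑ e ∈ h.support, h.coeff e * (c (w + fun i => (e i : ℤ)) : ℂ) = 0) →
      MvPolynomial.eval Z h = 0) :
    (∏ i, Z i) * ∏ v ∈ f.support.erase v₀,
      ((∏ i, Z i ^ ((r : ℤ) * v i)) - ∏ i, Z i ^ ((r : ℤ) * v₀ i)) = 0 := by
  by_cases hZ0 : ∃ i, Z i = 0
  · obtain ⟨i, hi⟩ := hZ0
    rw [prod_eq_zero (mem_univ i) hi, zero_mul]
  push Not at hZ0
  set W : (Fin d → ℤ) → ℂ := fun v => ∏ j, Z j ^ v j
  have hgeom : ∀ k : ℕ, ∑ v ∈ f.support, ((f v : ℂ) * W v) * (W v ^ r) ^ k = 0 := fun k => by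
    have hcop : (1 + k * r).Coprime r :=
      (Nat.coprime_add_mul_right_left 1 r k).2 r.coprime_one_left
    have hn := sum_mul_prod_zpow_eq_zero_of_annihilates hZ hZ0 (hrexp (1 + k * r) (by omega) hcop)
    simp only [Pi.smul_apply, nsmul_eq_mul, prod_zpow_natCast_mul] at hn
    rw [← hn]
    refine sum_congr rfl fun v _ => ?_
    rw [pow_add, pow_one, pow_mul', mul_assoc]
  have hW₀ : (f v₀ : ℂ) * W v₀ ≠ 0 :=
    mul_ne_zero (Int.cast_ne_zero.2 (Finsupp.mem_support_iff.1 hv₀))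
      (prod_ne_zero_iff.2 fun j _ => zpow_ne_zero _ (hZ0 j))
  obtain ⟨v, hv, hWv⟩ := exists_eq_of_forall_sum_mul_pow_eq_zero hgeom hv₀ hW₀
  rw [prod_eq_zero hv (by rw [prod_zpow_natCast_mul, prod_zpow_natCast_mul, hWv, sub_self]),
    mul_zero]

/-- The polynomial `g(X) = x₁⋯x_d · Π_{v ∈ S, v ≠ v₀} (X^{rv} - X^{rv₀})` vanishes
on every common root of the annihilator ideal of `c`. -/
theorem stmt_8 (d : ℕ) (c : (Fin d → ℤ) → ℤ) (hc : (Set.range c).Finite)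
    (f : (Fin d → ℤ) →₀ ℤ) (hf : f ≠ 0)
    (hann : ∀ w : Fin d → ℤ, ∑ v ∈ f.support, f v * c (w + v) = 0)
    (r : ℕ) (hr : 0 < r)
    (hrexp : ∀ n : ℕ, 0 < n → n.Coprime r →
      ∀ w : Fin d → ℤ, ∑ v ∈ f.support, f v * c (w + n • v) = 0)
    (v₀ : Fin d → ℤ) (hv₀ : v₀ ∈ f.support)
    (Z : Fin d → ℂ)
    (hZ : ∀ h : MvPolynomial (Fin d) ℂ,
      (∀ w : Fin d → ℤ,
        ∑ e ∈ h.support, h.coeff e * (c (w + fun i => (e i : ℤ)) : ℂ) = 0) →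
      MvPolynomial.eval Z h = 0) :
    (∏ i, Z i) * ∏ v ∈ f.support.erase v₀,
      ((∏ i, Z i ^ ((r : ℤ) * v i)) - ∏ i, Z i ^ ((r : ℤ) * v₀ i)) = 0 :=
  stmt_8_general d c f r hrexp v₀ hv₀ Z hZ
end

section
/- Let α be irrational, and let c : ℤ² → ℤ be defined by c(i,j) = ⌊(i+j)α⌋ − ⌊iα⌋ − ⌊jα⌋. Then c is annihilated by the Laurent polynomial (X^{(1,0)} − 1)(X^{(0,1)} − 1)(X^{(1,−1)} − 1), i.e., applying the three corresponding difference operators in succession to c yields the zero configuration. -/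
/-!
Each term of `c(i,j) = ⌊(i+j)α⌋ - ⌊iα⌋ - ⌊jα⌋` depends on one linear form only, `i + j`, `i` or
`j`, and each of the three difference operators kills the functions of one of these forms:
shifting by `(1,-1)` preserves `i + j`, by `(0,1)` preserves `i`, and by `(1,0)` preserves `j`.
Since the operators commute, their composition annihilates `c`.
-/

/-- The difference operator `X^v - 1` on configurations `ℤ² → G`. -/
def shiftSub {G : Type*} [AddCommGroup G] (v : ℤ × ℤ) (g : ℤ × ℤ → G) : ℤ × ℤ → G :=
  fun w => g (w + v) - g w

theorem shiftSub_shiftSub_shiftSub_eq_zero {G : Type*} [AddCommGroup G] (f g h : ℤ → G)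
    (c : ℤ × ℤ → G) (hc : ∀ i j, c (i, j) = f (i + j) + g i + h j) (u : ℤ × ℤ) :
    shiftSub (1, 0) (shiftSub (0, 1) (shiftSub (1, -1) c)) u = 0 := by
  obtain ⟨i, j⟩ := u
  simp only [shiftSub, Prod.mk_add_mk, hc]
  ring_nf
  abel

theorem stmt_14_general (α : ℝ) (c : ℤ × ℤ → ℤ)
    (hc : ∀ i j : ℤ, c (i, j) = ⌊((i : ℝ) + (j : ℝ)) * α⌋ - ⌊(i : ℝ) * α⌋ - ⌊(j : ℝ) * α⌋) :
    ∀ u : ℤ × ℤ,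
      ((fun g : ℤ × ℤ → ℤ => fun w => g (w + (1, 0)) - g w)
        ((fun g : ℤ × ℤ → ℤ => fun w => g (w + (0, 1)) - g w)
          ((fun g : ℤ × ℤ → ℤ => fun w => g (w + (1, -1)) - g w) c))) u = 0 :=
  shiftSub_shiftSub_shiftSub_eq_zero (fun n => ⌊(n : ℝ) * α⌋) (fun n => -⌊(n : ℝ) * α⌋)
    (fun n => -⌊(n : ℝ) * α⌋) c fun i j => by rw [hc]; push_cast; abel

/-- The configuration `c(i,j) = ⌊(i+j)α⌋ - ⌊iα⌋ - ⌊jα⌋` is annihilated by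
`(X^{(1,0)}-1)(X^{(0,1)}-1)(X^{(1,-1)}-1)`. -/
theorem stmt_14 (α : ℝ) (hα : Irrational α) (c : ℤ × ℤ → ℤ)
    (hc : ∀ i j : ℤ, c (i, j) = ⌊((i : ℝ) + (j : ℝ)) * α⌋ - ⌊(i : ℝ) * α⌋ - ⌊(j : ℝ) * α⌋) :
    ∀ u : ℤ × ℤ,
      ((fun g : ℤ × ℤ → ℤ => fun w => g (w + (1, 0)) - g w)
        ((fun g : ℤ × ℤ → ℤ => fun w => g (w + (0, 1)) - g w)
          ((fun g : ℤ × ℤ → ℤ => fun w => g (w + (1, -1)) - g w) c))) u = 0 :=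
  stmt_14_general α c hc
end

section
/- Define the configuration c : ℤ³ → ℤ by c(i,0,0) = 1 and c(0,i,n) = 1 for all i ∈ ℤ (where n ≥ 3 is a fixed integer), and c = 0 elsewhere. Then c is not periodic: there is no nonzero t ∈ ℤ³ with c(u+t) = c(u) for all u, yet c is annihilated by the Laurent polynomial (X^{(1,0,0)} − 1)(X^{(0,1,0)} − 1). -/
/-!
The configuration is the sum of the indicators of two disjoint lines: the `x`-axis, which is
invariant under `(1,0,0)`, and the line `{(0,i,n)}`, which is invariant under `(0,1,0)`.
Each factor of `(X^{(1,0,0)} - 1)(X^{(0,1,0)} - 1)` kills one of the two summands.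
A period `t` must map the origin into the support, and then `(0,0,n)` and `(0,1,n)` into the
support as well; since `n ≠ 0` this forces `t = 0`.
-/

theorem mixed_sub_add_eq_zero {M G : Type*} [AddCommGroup M] [AddCommGroup G] {f g : M → G}
    {a b : M} (hf : ∀ u, f (u + a) = f u) (hg : ∀ u, g (u + b) = g u) (u : M) :
    ((f + g) (u + a + b) - (f + g) (u + b)) - ((f + g) (u + a) - (f + g) u) = 0 := by
  have hfa : f (u + a + b) = f (u + b) := by rw [add_right_comm, hf]
  simp only [Pi.add_apply, hfa, hg, hf]
  abel

def twoLines (n : ℤ) (p : ℤ × ℤ × ℤ) : ℤ :=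
  if (p.2.1 = 0 ∧ p.2.2 = 0) ∨ (p.1 = 0 ∧ p.2.2 = n) then 1 else 0

namespace twoLines

variable {n : ℤ}

theorem eq_add (hn : n ≠ 0) :
    twoLines n = (fun p => if p.2.1 = 0 ∧ p.2.2 = 0 then 1 else 0) +
      (fun p => if p.1 = 0 ∧ p.2.2 = n then 1 else 0) := by
  funext ⟨x, y, z⟩
  simp only [twoLines, Pi.add_apply]
  split_ifs <;> omega

theorem eq_one_iff {p : ℤ × ℤ × ℤ} :
    twoLines n p = 1 ↔ (p.2.1 = 0 ∧ p.2.2 = 0) ∨ (p.1 = 0 ∧ p.2.2 = n) := by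
  unfold twoLines
  split_ifs <;> simp_all

theorem not_periodic (hn : n ≠ 0) :
    ¬ ∃ t : ℤ × ℤ × ℤ, t ≠ 0 ∧ ∀ u, twoLines n (u + t) = twoLines n u := by
  rintro ⟨⟨t₁, t₂, t₃⟩, ht, hper⟩
  have mem_of_mem : ∀ u, twoLines n u = 1 → twoLines n (u + (t₁, t₂, t₃)) = 1 :=
    fun u hu => (hper u).trans hu
  have h₀ := mem_of_mem (0, 0, 0) (eq_one_iff.2 (by simp))
  have h₁ := mem_of_mem (0, 0, n) (eq_one_iff.2 (by simp))
  have h₂ := mem_of_mem (0, 1, n) (eq_one_iff.2 (by simp))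
  simp only [eq_one_iff, Prod.mk_add_mk] at h₀ h₁ h₂
  exact ht (by simp only [Prod.mk_eq_zero]; omega)

theorem mixed_sub_eq_zero (hn : n ≠ 0) (u : ℤ × ℤ × ℤ) :
    (twoLines n (u + (1, 0, 0) + (0, 1, 0)) - twoLines n (u + (0, 1, 0))) -
      (twoLines n (u + (1, 0, 0)) - twoLines n u) = 0 := by
  rw [eq_add hn]
  refine mixed_sub_add_eq_zero (fun v => ?_) (fun v => ?_) u <;> simp

end twoLines

/-- The two-lines configuration in ℤ³ is non-periodic yet annihilated by
`(X^{(1,0,0)}-1)(X^{(0,1,0)}-1)`. -/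
theorem stmt_15 (n : ℤ) (hn : 3 ≤ n) (c : ℤ × ℤ × ℤ → ℤ)
    (hc : ∀ p : ℤ × ℤ × ℤ,
      c p = if (p.2.1 = 0 ∧ p.2.2 = 0) ∨ (p.1 = 0 ∧ p.2.2 = n) then 1 else 0) :
    (¬ ∃ t : ℤ × ℤ × ℤ, t ≠ 0 ∧ ∀ u, c (u + t) = c u) ∧
    (∀ u : ℤ × ℤ × ℤ,
      (c (u + (1, 0, 0) + (0, 1, 0)) - c (u + (0, 1, 0))) -
        (c (u + (1, 0, 0)) - c u) = 0) := by
  obtain rfl : c = twoLines n := funext hc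
  have hn0 : n ≠ 0 := by omega
  exact ⟨twoLines.not_periodic hn0, twoLines.mixed_sub_eq_zero hn0⟩
end

section
/- For the configuration c : ℤ³ → {0,1} with c(i,0,0) = c(0,i,n) = 1 for all i ∈ ℤ and 0 elsewhere (n ≥ 3 fixed), the number of distinct patterns of shape D = {0,…,n−1}³ occurring in c equals 2n² + 1, which is strictly less than n³ = |D|. -/
/-!
Translate by `v = (a, b, d)`. The window `v + D` meets the first line iff `(-b, -d) ∈ [0, n)²` and
the second iff `(-a, n - d) ∈ [0, n)²`; it cannot meet both, since their heights `0` and `n`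
differ by `n`. So a pattern is empty, a single segment parallel to the `x`-axis, or a single
segment parallel to the `y`-axis, each segment being determined by its two fixed coordinates in
`[0, n)²`. All of them occur, and for `n ≥ 2` they are pairwise distinct, giving `1 + n² + n²`.
-/

namespace TwoLines

abbrev Box (n : ℕ) : Type :=
  {u : ℤ × ℤ × ℤ // 0 ≤ u.1 ∧ u.1 < (n : ℤ) ∧ 0 ≤ u.2.1 ∧ u.2.1 < (n : ℤ) ∧
    0 ≤ u.2.2 ∧ u.2.2 < (n : ℤ)}

def config (n : ℕ) (p : ℤ × ℤ × ℤ) : ℤ :=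
  if (p.2.1 = 0 ∧ p.2.2 = 0) ∨ (p.1 = 0 ∧ p.2.2 = (n : ℤ)) then 1 else 0

def pattern (c : ℤ × ℤ × ℤ → ℤ) (n : ℕ) (v : ℤ × ℤ × ℤ) : Box n → ℤ :=
  fun u => c (v + u.1)

theorem setOf_exists_eq_pattern (c : ℤ × ℤ × ℤ → ℤ) (n : ℕ) :
    {pat : Box n → ℤ | ∃ v, ∀ u, pat u = c (v + u.1)} = Set.range (pattern c n) := by
  ext pat
  simp only [Set.mem_ofPred_eq, Set.mem_range, funext_iff, pattern, eq_comm]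

def square (n : ℕ) : Set (ℤ × ℤ) :=
  Set.Ico 0 (n : ℤ) ×ˢ Set.Ico 0 (n : ℤ)

def xSegment (n : ℕ) (p : ℤ × ℤ) : Box n → ℤ :=
  fun u => if u.1.2.1 = p.1 ∧ u.1.2.2 = p.2 then 1 else 0

def ySegment (n : ℕ) (p : ℤ × ℤ) : Box n → ℤ :=
  fun u => if u.1.1 = p.1 ∧ u.1.2.2 = p.2 then 1 else 0

variable {n : ℕ}

theorem mem_square {p : ℤ × ℤ} : p ∈ square n ↔ 0 ≤ p.1 ∧ p.1 < n ∧ 0 ≤ p.2 ∧ p.2 < n := by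
  simp [square, and_assoc]

theorem ncard_square : (square n).ncard = n * n := by
  rw [square, Set.ncard_prod, ← Finset.coe_Ico, Set.ncard_coe_finset, Int.card_Ico, sub_zero,
    Int.toNat_natCast]

theorem pattern_config_mem (v : ℤ × ℤ × ℤ) :
    pattern (config n) n v ∈
      insert 0 (xSegment n '' square n ∪ ySegment n '' square n) := by
  obtain ⟨a, b, d⟩ := v
  by_cases hx : (-b, -d) ∈ square n
  · refine Or.inr (Or.inl ⟨_, hx, ?_⟩)
    rw [mem_square] at hx
    funext ⟨⟨i, j, k⟩, hu⟩
    simp only [pattern, config, xSegment, Prod.mk_add_mk] at hu ⊢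
    split_ifs <;> omega
  by_cases hy : (-a, (n : ℤ) - d) ∈ square n
  · refine Or.inr (Or.inr ⟨_, hy, ?_⟩)
    rw [mem_square] at hy
    funext ⟨⟨i, j, k⟩, hu⟩
    simp only [pattern, config, ySegment, Prod.mk_add_mk] at hu ⊢
    split_ifs <;> omega
  · rw [mem_square] at hx hy
    refine Or.inl (funext fun ⟨⟨i, j, k⟩, hu⟩ => ?_)
    simp only [pattern, config, Prod.mk_add_mk, Pi.zero_apply] at hu ⊢
    split_ifs <;> omega

theorem zero_mem_range_pattern_config : (0 : Box n → ℤ) ∈ Set.range (pattern (config n) n) := by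
  refine ⟨(1, 1, 1), funext fun ⟨⟨i, j, k⟩, hu⟩ => ?_⟩
  simp only [pattern, config, Prod.mk_add_mk, Pi.zero_apply] at hu ⊢
  split_ifs <;> omega

-- For `-n ≤ p.2 < 0` the window at `(0, -p.1, -p.2)` would meet the second line as well.
theorem xSegment_mem_range_pattern_config {p : ℤ × ℤ} (hp : p ∈ square n) :
    xSegment n p ∈ Set.range (pattern (config n) n) := by
  rw [mem_square] at hp
  refine ⟨(0, -p.1, -p.2), funext fun ⟨⟨i, j, k⟩, hu⟩ => ?_⟩
  simp only [pattern, config, xSegment, Prod.mk_add_mk] at hu ⊢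
  split_ifs <;> omega

theorem ySegment_mem_range_pattern_config (p : ℤ × ℤ) :
    ySegment n p ∈ Set.range (pattern (config n) n) := by
  refine ⟨(-p.1, 1, (n : ℤ) - p.2), funext fun ⟨⟨i, j, k⟩, hu⟩ => ?_⟩
  simp only [pattern, config, ySegment, Prod.mk_add_mk] at hu ⊢
  split_ifs <;> omega

theorem range_pattern_config :
    Set.range (pattern (config n) n) =
      insert 0 (xSegment n '' square n ∪ ySegment n '' square n) := by
  refine subset_antisymm (Set.range_subset_iff.2 pattern_config_mem) ?_
  rintro _ (rfl | ⟨p, hp, rfl⟩ | ⟨p, -, rfl⟩)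
  · exact zero_mem_range_pattern_config
  · exact xSegment_mem_range_pattern_config hp
  · exact ySegment_mem_range_pattern_config p

theorem xSegment_injOn : Set.InjOn (xSegment n) (square n) := by
  intro p hp q _ h
  rw [mem_square] at hp
  have hpq := congrFun h ⟨(0, p.1, p.2), by dsimp only; omega⟩
  simp only [xSegment, and_self, if_true] at hpq
  split_ifs at hpq with hq
  exacts [Prod.ext hq.1 hq.2, absurd hpq one_ne_zero]

theorem ySegment_injOn : Set.InjOn (ySegment n) (square n) := by
  intro p hp q _ h
  rw [mem_square] at hp
  have hpq := congrFun h ⟨(p.1, 0, p.2), by dsimp only; omega⟩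
  simp only [ySegment, and_self, if_true] at hpq
  split_ifs at hpq with hq
  exacts [Prod.ext hq.1 hq.2, absurd hpq one_ne_zero]

theorem disjoint_image_xSegment_image_ySegment (hn : 2 ≤ n) :
    Disjoint (xSegment n '' square n) (ySegment n '' square n) := by
  rw [Set.disjoint_left]
  rintro _ ⟨p, hp, rfl⟩ ⟨q, -, hqp⟩
  rw [mem_square] at hp
  have h0 := congrFun hqp ⟨(0, p.1, p.2), by dsimp only; omega⟩
  have h1 := congrFun hqp ⟨(1, p.1, p.2), by dsimp only; omega⟩
  simp only [xSegment, ySegment, and_self, if_true] at h0 h1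
  split_ifs at h0 h1 <;> omega

theorem zero_notMem_image_xSegment_union_image_ySegment :
    (0 : Box n → ℤ) ∉ xSegment n '' square n ∪ ySegment n '' square n := by
  rintro (⟨p, hp, h⟩ | ⟨p, hp, h⟩) <;> rw [mem_square] at hp
  · have := congrFun h ⟨(0, p.1, p.2), by dsimp only; omega⟩
    simp [xSegment] at this
  · have := congrFun h ⟨(p.1, 0, p.2), by dsimp only; omega⟩
    simp [ySegment] at this

theorem ncard_range_pattern_config (hn : 2 ≤ n) :
    (Set.range (pattern (config n) n)).ncard = 2 * n ^ 2 + 1 := by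
  have hfin : (square n).Finite := (Set.finite_Ico _ _).prod (Set.finite_Ico _ _)
  rw [range_pattern_config,
    Set.ncard_insert_of_notMem zero_notMem_image_xSegment_union_image_ySegment
      ((hfin.image _).union (hfin.image _)),
    Set.ncard_union_eq (disjoint_image_xSegment_image_ySegment hn) (hfin.image _) (hfin.image _),
    xSegment_injOn.ncard_image, ySegment_injOn.ncard_image, ncard_square]
  ring

end TwoLines

theorem two_mul_sq_add_one_lt_cube {n : ℕ} (hn : 3 ≤ n) : 2 * n ^ 2 + 1 < n ^ 3 := by
  nlinarith

open TwoLines in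
/-- The two-lines configuration in ℤ³ has exactly `2n²+1` patterns of shape
`{0,…,n-1}³`, which is less than `n³`. -/
theorem stmt_16 (n : ℕ) (hn : 3 ≤ n) (c : ℤ × ℤ × ℤ → ℤ)
    (hc : ∀ p : ℤ × ℤ × ℤ,
      c p = if (p.2.1 = 0 ∧ p.2.2 = 0) ∨ (p.1 = 0 ∧ p.2.2 = (n : ℤ)) then 1 else 0) :
    {pat : {u : ℤ × ℤ × ℤ // 0 ≤ u.1 ∧ u.1 < (n : ℤ) ∧ 0 ≤ u.2.1 ∧ u.2.1 < (n : ℤ) ∧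
        0 ≤ u.2.2 ∧ u.2.2 < (n : ℤ)} → ℤ |
        ∃ v : ℤ × ℤ × ℤ, ∀ u, pat u = c (v + u.1)}.ncard = 2 * n ^ 2 + 1 ∧
    2 * n ^ 2 + 1 < n ^ 3 := by
  obtain rfl : c = config n := funext hc
  rw [setOf_exists_eq_pattern]
  exact ⟨ncard_range_pattern_config (by omega), two_mul_sq_add_one_lt_cube hn⟩
end

section
/- Every two-variable complex Laurent line polynomial f can be written as f(X) = a_n X^{v'} (X^v − λ₁)⋯(X^v − λ_n) where v ∈ ℤ² is a primitive vector, v' ∈ ℤ², a_n ∈ ℂ is nonzero, n ≥ 1, and λ₁,…,λ_n are nonzero complex numbers. -/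
open Polynomial

/-- Every two-variable complex Laurent line polynomial factors as
`a · X^{v'} · (X^v - λ₁)⋯(X^v - λ_n)` with `v` primitive and all `λᵢ` nonzero. -/
theorem stmt_17 (f : AddMonoidAlgebra ℂ (ℤ × ℤ))
    (hcard : 2 ≤ f.coeff.support.card)
    (hline : ∃ w t : ℤ × ℤ, ∀ u ∈ f.coeff.support, ∃ k : ℤ, u = w + k • t) :
    ∃ (v v' : ℤ × ℤ) (n : ℕ) (a : ℂ) (lam : Fin n → ℂ),
      Int.gcd v.1 v.2 = 1 ∧ a ≠ 0 ∧ 1 ≤ n ∧ (∀ i, lam i ≠ 0) ∧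
      f = AddMonoidAlgebra.single v' a *
        ∏ i, (AddMonoidAlgebra.single v (1 : ℂ) -
          AddMonoidAlgebra.single (0 : ℤ × ℤ) (lam i)) := by
  classical
  obtain ⟨w, t, hwt⟩ := hline
  obtain ⟨u₁, hu₁, u₂, hu₂, hne⟩ := Finset.one_lt_card.mp (by omega : 1 < f.coeff.support.card)
  -- t ≠ 0
  have ht : t ≠ 0 := by
    rintro rfl
    obtain ⟨k₁, hk₁⟩ := hwt u₁ hu₁
    obtain ⟨k₂, hk₂⟩ := hwt u₂ hu₂
    simp only [smul_zero, add_zero] at hk₁ hk₂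
    exact hne (hk₁.trans hk₂.symm)
  set g : ℤ := (Int.gcd t.1 t.2 : ℤ) with hg
  have hgpos : 0 < g := by
    have h : t.1 ≠ 0 ∨ t.2 ≠ 0 := by
      by_contra h
      push_neg at h
      exact ht (Prod.ext h.1 h.2)
    rw [hg]
    exact_mod_cast Int.gcd_pos_iff.mpr h
  set v : ℤ × ℤ := (t.1 / g, t.2 / g) with hv
  have hprim : Int.gcd v.1 v.2 = 1 := by
    have h : 0 < Int.gcd t.1 t.2 := by
      have := hgpos
      rw [hg] at this
      exact_mod_cast this
    exact Int.gcd_div_gcd_div_gcd h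
  have htv : t = g • v := by
    apply Prod.ext
    · simp only [hv, Prod.smul_fst, smul_eq_mul]
      rw [Int.mul_ediv_cancel' (Int.gcd_dvd_left _ _)]
    · simp only [hv, Prod.smul_snd, smul_eq_mul]
      rw [Int.mul_ediv_cancel' (Int.gcd_dvd_right _ _)]
  -- every support point is w + k • v
  have hwv : ∀ u ∈ f.coeff.support, ∃ k : ℤ, u = w + k • v := by
    intro u hu
    obtain ⟨k, hk⟩ := hwt u hu
    exact ⟨k * g, by rw [hk, htv, smul_smul]⟩
  have hvne : v ≠ 0 := by
    rintro h
    rw [h] at hprim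
    simp at hprim
  -- explicit coordinate extraction
  set K : ℤ × ℤ → ℤ := fun u => if v.1 ≠ 0 then (u.1 - w.1) / v.1 else (u.2 - w.2) / v.2
    with hKdef
  have hK : ∀ u ∈ f.coeff.support, u = w + K u • v := by
    intro u hu
    obtain ⟨k, hk⟩ := hwv u hu
    suffices h : K u = k by rw [h]; exact hk
    have h1 : u.1 = w.1 + k * v.1 := by rw [hk]; rfl
    have h2 : u.2 = w.2 + k * v.2 := by rw [hk]; rfl
    by_cases hv1 : v.1 ≠ 0
    · simp only [hKdef, if_pos hv1]
      rw [h1, add_sub_cancel_left, Int.mul_ediv_cancel _ hv1]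
    · have hv2 : v.2 ≠ 0 := by
        intro hv2
        push_neg at hv1
        exact hvne (Prod.ext hv1 hv2)
      simp only [hKdef, if_neg hv1]
      rw [h2, add_sub_cancel_left, Int.mul_ediv_cancel _ hv2]
  have hKinj : ∀ u ∈ f.coeff.support, ∀ u' ∈ f.coeff.support, K u = K u' → u = u' := by
    intro u hu u' hu' h
    rw [hK u hu, hK u' hu', h]
  -- minimum exponent
  have hSne : (f.coeff.support.image K).Nonempty := ⟨K u₁, Finset.mem_image_of_mem K hu₁⟩
  set m : ℤ := (f.coeff.support.image K).min' hSne with hm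
  have hmle : ∀ u ∈ f.coeff.support, m ≤ K u := fun u hu =>
    Finset.min'_le _ _ (Finset.mem_image_of_mem K hu)
  obtain ⟨u₀, hu₀, hKu₀⟩ := Finset.mem_image.mp (Finset.min'_mem _ hSne)
  -- the companion one-variable polynomial
  set p : ℂ[X] := ∑ u ∈ f.coeff.support, C (f.coeff u) * X ^ (K u - m).toNat with hp
  have hcoeff : ∀ u ∈ f.coeff.support, p.coeff (K u - m).toNat = f.coeff u := by
    intro u hu
    rw [hp, finset_sum_coeff]
    rw [Finset.sum_eq_single u]
    · simp [coeff_C_mul, coeff_X_pow]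
    · intro u' hu' hne'
      simp only [coeff_C_mul, coeff_X_pow]
      rw [if_neg, mul_zero]
      intro hEq
      have : K u' = K u := by
        have h1 := Int.toNat_of_nonneg (sub_nonneg.mpr (hmle u' hu'))
        have h2 := Int.toNat_of_nonneg (sub_nonneg.mpr (hmle u hu))
        omega
      exact hne' (hKinj u' hu' u hu this)
    · intro h; exact absurd hu h
  have hc0 : p.coeff 0 ≠ 0 := by
    have : p.coeff (K u₀ - m).toNat = f.coeff u₀ := hcoeff u₀ hu₀
    rw [hKu₀, sub_self, Int.toNat_zero] at this
    rw [this]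
    exact Finsupp.mem_support_iff.mp hu₀
  have hp0 : p ≠ 0 := fun h => hc0 (by rw [h]; simp)
  -- natDegree ≥ 1
  have hdeg : 1 ≤ p.natDegree := by
    have hKne : K u₁ ≠ K u₂ := fun h => hne (hKinj u₁ hu₁ u₂ hu₂ h)
    obtain ⟨u, hu, hlt⟩ : ∃ u ∈ f.coeff.support, m < K u := by
      rcases lt_or_gt_of_ne hKne with h | h
      · exact ⟨u₂, hu₂, lt_of_le_of_lt (hmle u₁ hu₁) h⟩
      · exact ⟨u₁, hu₁, lt_of_le_of_lt (hmle u₂ hu₂) h⟩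
    have h1 : p.coeff (K u - m).toNat ≠ 0 := by
      rw [hcoeff u hu]; exact Finsupp.mem_support_iff.mp hu
    have := le_natDegree_of_ne_zero h1
    omega
  -- factor p over ℂ
  have hsp : p.Splits := IsAlgClosed.splits p
  have hfac : p = C p.leadingCoeff * (p.roots.map fun a => X - C a).prod :=
    hsp.eq_prod_roots
  set l : List ℂ := p.roots.toList with hl
  have hlen : l.length = p.natDegree := by
    rw [hl, Multiset.length_toList]
    exact (splits_iff_card_roots.mp hsp)
  set n : ℕ := l.length with hn
  set lam : Fin n → ℂ := fun i => l.get i with hlam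
  have hmem : ∀ i, lam i ∈ p.roots := fun i => by
    rw [← Multiset.mem_toList]; exact List.get_mem l i
  have hlamne : ∀ i, lam i ≠ 0 := by
    intro i h
    have hr := (mem_roots hp0).mp (hmem i)
    rw [h] at hr
    rw [IsRoot, ← coeff_zero_eq_eval_zero] at hr
    exact hc0 hr
  have hprodlist : (∏ i, (X - C (lam i))) = (p.roots.map fun a => X - C a).prod := by
    have h1 : l.map (fun a => X - C a) = List.ofFn fun i => X - C (lam i) := by
      conv_lhs => rw [← List.ofFn_get l]
      rw [List.map_ofFn]
      rfl
    rw [← Multiset.coe_toList p.roots, ← hl, Multiset.map_coe, Multiset.prod_coe, h1,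
      List.prod_ofFn]
  -- the evaluation homomorphism
  set s : AddMonoidAlgebra ℂ (ℤ × ℤ) := AddMonoidAlgebra.single v (1 : ℂ) with hs
  have haevalC : ∀ c : ℂ, aeval s (C c) = AddMonoidAlgebra.single (0 : ℤ × ℤ) c := by
    intro c
    rw [aeval_C]
    rw [AddMonoidAlgebra.coe_algebraMap]
    simp
  have haevalmono : ∀ (c : ℂ) (e : ℕ),
      aeval s (C c * X ^ e) = AddMonoidAlgebra.single ((e : ℤ) • v) c := by
    intro c e
    rw [map_mul, haevalC, map_pow, aeval_X, hs, AddMonoidAlgebra.single_pow,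
      AddMonoidAlgebra.single_mul_single, one_pow, zero_add, mul_one, natCast_zsmul]
  -- the key factorization of f through p
  have hfp : f = AddMonoidAlgebra.single (w + m • v) (1 : ℂ) * aeval s p := by
    conv_lhs => rw [← AddMonoidAlgebra.sum_coeff_single f]
    rw [Finsupp.sum, hp, map_sum, Finset.mul_sum]
    apply Finset.sum_congr rfl
    intro u hu
    rw [haevalmono, AddMonoidAlgebra.single_mul_single, one_mul]
    congr 1
    have h2 : (0:ℤ) ≤ K u - m := sub_nonneg.mpr (hmle u hu)
    rw [Int.toNat_of_nonneg h2]
    conv_lhs => rw [hK u hu]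
    rw [add_assoc, ← add_smul]
    have h3 : m + (K u - m) = K u := by ring
    rw [h3]
  refine ⟨v, w + m • v, n, p.leadingCoeff, lam, hprim,
    leadingCoeff_ne_zero.mpr hp0, by omega, hlamne, ?_⟩
  rw [hfp]
  conv_lhs => rw [hfac]
  rw [← hprodlist, map_mul, haevalC, map_prod]
  rw [← mul_assoc, AddMonoidAlgebra.single_mul_single, add_zero, one_mul]
  congr 1
  apply Finset.prod_congr rfl
  intro i _
  rw [map_sub, aeval_X, haevalC]
end

section
/- Every prime ideal of ℂ[x,y] is either a maximal ideal, or a principal ideal generated by an irreducible polynomial, or the zero ideal. -/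
/-!
ℂ[x,y] is a unique factorization domain of Krull dimension 2. A nonzero prime that is not
maximal sits strictly inside a maximal ideal, so its height is exactly 1, and a height-one
prime of a UFD is generated by any prime element it contains.
-/

theorem Ideal.height_add_one_le_ringKrullDim_of_not_isMaximal {R : Type*} [CommRing R]
    {P : Ideal R} [P.IsPrime] (hP : ¬ P.IsMaximal) :
    ((P.height + 1 : ℕ∞) : WithBot ℕ∞) ≤ ringKrullDim R := by
  obtain ⟨M, hM, hPM⟩ := P.exists_le_maximal (Ideal.IsPrime.ne_top ‹_›)
  have hlt : P < M := lt_of_le_of_ne hPM fun h => hP (h ▸ hM)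
  exact (WithBot.coe_le_coe.mpr (Ideal.height_add_one_le_of_lt_of_isPrime hlt)).trans
    M.height_le_ringKrullDim_of_isPrime

theorem Ideal.IsPrime.isMaximal_or_eq_span_prime_or_eq_bot {R : Type*} [CommRing R] [IsDomain R]
    [UniqueFactorizationMonoid R] (hdim : ringKrullDim R ≤ 2) {P : Ideal R} (hP : P.IsPrime) :
    P.IsMaximal ∨ (∃ f : R, Prime f ∧ P = Ideal.span {f}) ∨ P = ⊥ := by
  by_cases hmax : P.IsMaximal
  · exact .inl hmax
  by_cases hbot : P = ⊥
  · exact .inr (.inr hbot)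
  obtain ⟨f, hfP, hf⟩ := hP.exists_mem_prime_of_ne_bot hbot
  have hle : P.height ≤ 1 := by
    have h : ((P.height + 1 : ℕ∞) : WithBot ℕ∞) ≤ (1 + 1 : ℕ∞) :=
      (P.height_add_one_le_ringKrullDim_of_not_isMaximal hmax).trans hdim
    exact (ENat.add_le_add_iff_right ENat.one_ne_top).mp (WithBot.coe_le_coe.mp h)
  have hge : 1 ≤ P.height :=
    Order.one_le_iff_pos.mpr (pos_iff_ne_zero.mpr (Ideal.height_eq_zero_iff_eq_bot.not.mpr hbot))
  exact .inr (.inl ⟨f, hf, P.eq_span_singleton_of_height_eq_one (le_antisymm hle hge) hfP hf⟩)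

theorem MvPolynomial.ringKrullDim_fin_two (K : Type*) [Field K] :
    ringKrullDim (MvPolynomial (Fin 2) K) = 2 := by
  rw [MvPolynomial.ringKrullDim_of_isNoetherianRing,
    ringKrullDim_eq_zero_of_isField (Field.toIsField K)]
  simp

/-- Prime ideals of ℂ[x,y] are maximal ideals, principal ideals generated by an
irreducible polynomial, or the zero ideal. -/
theorem stmt_18 (P : Ideal (MvPolynomial (Fin 2) ℂ)) (hP : P.IsPrime) :
    P.IsMaximal ∨ (∃ f : MvPolynomial (Fin 2) ℂ, Irreducible f ∧ P = Ideal.span {f}) ∨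
      P = ⊥ := by
  obtain hmax | ⟨f, hf, rfl⟩ | hbot :=
    hP.isMaximal_or_eq_span_prime_or_eq_bot (MvPolynomial.ringKrullDim_fin_two ℂ).le
  · exact .inl hmax
  · exact .inr (.inl ⟨f, hf.irreducible, rfl⟩)
  · exact .inr (.inr hbot)
end

section
/- Let c : ℤ² → A be a non-periodic configuration with values in a finite alphabet A. Then there exists a partition of A into two nonempty classes such that the induced two-letter configuration c' : ℤ² → {0,1} (mapping positions by which class their symbol lies in) is still non-periodic; moreover, for every finite D ⊆ ℤ², the D-pattern complexity satisfies P_{c'}(D) ≤ P_c(D). -/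
/-!
Suppose every merge `π : A → Bool` turns `c` into a periodic configuration. Then each letter
indicator `χₐ` has a nonzero period `Tₐ`. If the indicators that are not doubly periodic have
pairwise parallel periods, all indicators share a nonzero period (a common multiple of one
direction), and so does `c`. Otherwise there are letters `a ≠ b` whose indicators have only
periods on the non-parallel lines `ℤ Tₐ` and `ℤ T_b`. Merging exactly `a` and `b` gives a
periodic `χₐ + χ_b`, with period `t`. Then the increment `χₐ(· + t) - χₐ = χ_b - χ_b(· + t)`
is both `Tₐ`- and `T_b`-periodic, hence periodic along a multiple of `t`, and a `0/1`-valued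
function cannot drift along that direction: a multiple of `t` is a period of `χₐ`, and likewise
of `χ_b`. So `t` lies on both lines, which is absurd.

Merging letters cannot increase pattern complexity because the patterns of `π ∘ c` are the
images under `π` of the patterns of `c`.
-/

open Function

namespace Configuration

def cross (s t : ℤ × ℤ) : ℤ := s.1 * t.2 - s.2 * t.1

lemma cross_self (s : ℤ × ℤ) : cross s s = 0 := by
  unfold cross; ring

lemma cross_anticomm (s t : ℤ × ℤ) : -cross s t = cross t s := by
  unfold cross; ring

lemma cross_zsmul_left (m : ℤ) (s t : ℤ × ℤ) : cross (m • s) t = m * cross s t := by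
  simp only [cross, Prod.smul_fst, Prod.smul_snd, smul_eq_mul]; ring

/-- Cramer's rule. -/
lemma cross_smul_eq (s t w : ℤ × ℤ) : cross s t • w = cross w t • s + cross s w • t := by
  ext <;> simp only [cross, Prod.smul_fst, Prod.smul_snd, Prod.fst_add, Prod.snd_add,
    smul_eq_mul] <;> ring

lemma exists_cross_ne_zero {t : ℤ × ℤ} (ht : t ≠ 0) : ∃ r, cross r t ≠ 0 := by
  by_contra! h
  have h₁ := h (1, 0)
  have h₂ := h (0, 1)
  simp only [cross, one_mul, zero_mul, sub_zero, zero_sub, neg_eq_zero] at h₁ h₂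
  exact ht (Prod.ext h₂ h₁)

lemma cross_eq_zero_trans {t u v : ℤ × ℤ} (ht : t ≠ 0) (hu : cross t u = 0)
    (hv : cross t v = 0) : cross u v = 0 := by
  have h := cross_smul_eq u v t
  rw [hv, ← cross_anticomm t u, hu, neg_zero, zero_smul, zero_smul, add_zero] at h
  exact (smul_eq_zero.1 h).resolve_right ht

section DoublyPeriodic

variable {X : Type*}

def IsDoublyPeriodic (f : ℤ × ℤ → X) : Prop :=
  ∃ s t, Periodic f s ∧ Periodic f t ∧ cross s t ≠ 0

lemma cross_eq_zero_of_not_isDoublyPeriodic {f : ℤ × ℤ → X} (hf : ¬IsDoublyPeriodic f)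
    {s t : ℤ × ℤ} (hs : Periodic f s) (ht : Periodic f t) : cross s t = 0 := by
  by_contra h
  exact hf ⟨s, t, hs, ht, h⟩

lemma IsDoublyPeriodic.exists_periodic_zsmul {f : ℤ × ℤ → X} (hf : IsDoublyPeriodic f)
    (w : ℤ × ℤ) : ∃ k : ℤ, k ≠ 0 ∧ Periodic f (k • w) := by
  obtain ⟨s, t, hs, ht, hst⟩ := hf
  refine ⟨cross s t, hst, ?_⟩
  rw [cross_smul_eq]
  exact (hs.zsmul _).add_period (ht.zsmul _)

lemma exists_periodic_zsmul_of_cross_eq_zero {f : ℤ × ℤ → X} {t w : ℤ × ℤ}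
    (ht : Periodic f t) (ht0 : t ≠ 0) (hw : cross w t = 0) :
    ∃ k : ℤ, k ≠ 0 ∧ Periodic f (k • w) := by
  obtain ⟨r, hr⟩ := exists_cross_ne_zero ht0
  refine ⟨cross r t, hr, ?_⟩
  rw [cross_smul_eq, hw, zero_smul, zero_add]
  exact ht.zsmul _

lemma exists_zsmul_forall_periodic {ι α : Type*} [Finite ι] [AddGroup α] {f : ι → α → X}
    {w : α} (h : ∀ i, ∃ k : ℤ, k ≠ 0 ∧ Periodic (f i) (k • w)) :
    ∃ k : ℤ, k ≠ 0 ∧ ∀ i, Periodic (f i) (k • w) := by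
  classical
  cases nonempty_fintype ι
  choose k hk0 hk using h
  refine ⟨∏ i, k i, Finset.prod_ne_zero_iff.2 fun i _ => hk0 i, fun i => ?_⟩
  rw [← Finset.mul_prod_erase _ _ (Finset.mem_univ i), mul_zsmul']
  exact (hk i).zsmul _

lemma exists_forall_periodic {ι : Type*} [Finite ι] (f : ι → ℤ × ℤ → X) {T : ι → ℤ × ℤ}
    (hT0 : ∀ i, T i ≠ 0) (hT : ∀ i, Periodic (f i) (T i))
    (hpar : ∀ i j, ¬IsDoublyPeriodic (f i) → ¬IsDoublyPeriodic (f j) → cross (T i) (T j) = 0) :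
    ∃ s ≠ 0, ∀ i, Periodic (f i) s := by
  obtain ⟨w, hw0, hw⟩ : ∃ w ≠ 0, ∀ i, ¬IsDoublyPeriodic (f i) → cross w (T i) = 0 := by
    by_cases h : ∃ i, ¬IsDoublyPeriodic (f i)
    · obtain ⟨i₀, hi₀⟩ := h
      exact ⟨T i₀, hT0 i₀, fun i hi => hpar i₀ i hi₀ hi⟩
    · push Not at h
      exact ⟨(1, 0), by simp, fun i hi => (hi (h i)).elim⟩
  have hmul : ∀ i, ∃ k : ℤ, k ≠ 0 ∧ Periodic (f i) (k • w) := by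
    intro i
    by_cases hi : IsDoublyPeriodic (f i)
    · exact hi.exists_periodic_zsmul w
    · exact exists_periodic_zsmul_of_cross_eq_zero (hT i) (hT0 i) (hw i hi)
  obtain ⟨k, hk0, hk⟩ := exists_zsmul_forall_periodic hmul
  exact ⟨k • w, smul_ne_zero hk0 hw0, hk⟩

end DoublyPeriodic

section Increments

variable {α β : Type*} [AddCommGroup α] [AddCommGroup β]

def incrementPeriods (F : α → β) (p : α) : AddSubgroup α where
  carrier := {s | Periodic (fun x => F (x + s) - F x) p}
  zero_mem' := fun x => by simp
  add_mem' {s t} hs ht := by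
    change Periodic (fun x => F (x + s) - F x) p at hs
    change Periodic (fun x => F (x + t) - F x) p at ht
    have h : (fun x => F (x + (s + t)) - F x) =
        (fun x => F (x + t + s) - F (x + t)) + fun x => F (x + t) - F x := by
      funext x
      simp only [Pi.add_apply, add_comm s t, ← add_assoc]
      abel
    change Periodic (fun x => F (x + (s + t)) - F x) p
    rw [h]
    exact (hs.add_const t).add ht
  neg_mem' {s} hs := by
    change Periodic (fun x => F (x + s) - F x) p at hs
    have h : (fun x => F (x + -s) - F x) = Neg.neg ∘ fun x => F (x + -s + s) - F (x + -s) := by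
      funext x
      simp
    change Periodic (fun x => F (x + -s) - F x) p
    rw [h]
    exact (hs.add_const (-s)).comp _

lemma periodic_of_periodic_sub {F : α → ℤ} {s : α} (hF : ∀ x, F x = 0 ∨ F x = 1)
    (h : Periodic (fun x => F (x + s) - F x) s) : Periodic F s := by
  intro x
  have h' := h x
  simp only at h'
  rcases hF x with h₀ | h₀ <;> rcases hF (x + s) with h₁ | h₁ <;>
    rcases hF (x + s + s) with h₂ | h₂ <;> omega

end Increments

lemma periodic_cross_smul_of_periodic_add {F G : ℤ × ℤ → ℤ} (hF : ∀ x, F x = 0 ∨ F x = 1)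
    {u v t : ℤ × ℤ} (hu : Periodic F u) (hv : Periodic G v) (ht : Periodic (F + G) t) :
    Periodic F (cross u v • t) := by
  have hD : (fun x => F (x + t) - F x) = fun x => G x - G (x + t) := by
    funext x
    have := ht x
    simp only [Pi.add_apply] at this
    linarith
  have hDu : Periodic (fun x => F (x + t) - F x) u := (hu.add_const t).sub hu
  have hDv : Periodic (fun x => F (x + t) - F x) v := by
    rw [hD]
    exact hv.sub (hv.add_const t)
  have htmem : t ∈ incrementPeriods F (cross u v • t) := by
    change Periodic (fun x => F (x + t) - F x) (cross u v • t)
    rw [cross_smul_eq]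
    exact (hDu.zsmul _).add_period (hDv.zsmul _)
  exact periodic_of_periodic_sub hF ((incrementPeriods F _).zsmul_mem htmem _)

lemma periodic_cross_smul_of_periodic_or {f g : ℤ × ℤ → Bool} (hfg : ∀ x, (f x && g x) = false)
    {u v t : ℤ × ℤ} (hu : Periodic f u) (hv : Periodic g v)
    (ht : Periodic (fun x => f x || g x) t) : Periodic f (cross u v • t) := by
  have hsum : Bool.toInt ∘ f + Bool.toInt ∘ g = Bool.toInt ∘ fun x => f x || g x := by
    funext x
    have hx := hfg x
    simp only [comp_apply, Pi.add_apply]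
    revert hx
    cases f x <;> cases g x <;> simp
  have hinj : Injective Bool.toInt := by
    intro a b
    cases a <;> cases b <;> simp
  have h01 : ∀ x, (Bool.toInt ∘ f) x = 0 ∨ (Bool.toInt ∘ f) x = 1 := by
    intro x
    simp only [comp_apply]
    cases f x <;> simp
  have ht' : Periodic (Bool.toInt ∘ f + Bool.toInt ∘ g) t := by
    rw [hsum]
    exact ht.comp Bool.toInt
  have h := periodic_cross_smul_of_periodic_add h01 (hu.comp Bool.toInt) (hv.comp Bool.toInt) ht'
  exact fun x => hinj (h x)

lemma not_periodic_or {f g : ℤ × ℤ → Bool} (hfg : ∀ x, (f x && g x) = false)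
    (hf : ¬IsDoublyPeriodic f) (hg : ¬IsDoublyPeriodic g) {u v : ℤ × ℤ} (hu : Periodic f u)
    (hv : Periodic g v) (huv : cross u v ≠ 0) {t : ℤ × ℤ} (ht0 : t ≠ 0) :
    ¬Periodic (fun x => f x || g x) t := by
  intro ht
  have hvu : cross v u ≠ 0 := by
    rw [← cross_anticomm]
    exact neg_ne_zero.2 huv
  have htf := periodic_cross_smul_of_periodic_or hfg hu hv ht
  have htg := periodic_cross_smul_of_periodic_or (fun x => by rw [Bool.and_comm]; exact hfg x)
    hv hu (by simpa only [Bool.or_comm] using ht)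
  have htu := cross_eq_zero_of_not_isDoublyPeriodic hf htf hu
  have htv := cross_eq_zero_of_not_isDoublyPeriodic hg htg hv
  rw [cross_zsmul_left, mul_eq_zero, or_iff_right huv] at htu
  rw [cross_zsmul_left, mul_eq_zero, or_iff_right hvu] at htv
  exact huv (cross_eq_zero_trans ht0 htu htv)

lemma exists_periodic_comp_of_not_surjective {A : Type*} (c : ℤ × ℤ → A) {π : A → Bool}
    (hπ : ¬Surjective π) : ∃ t ≠ 0, Periodic (π ∘ c) t := by
  obtain ⟨b, hb⟩ : ∃ b, ∀ a, π a ≠ b := by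
    simpa only [Surjective, not_forall, not_exists] using hπ
  refine ⟨(1, 0), by simp, fun u => ?_⟩
  simp only [comp_apply, Bool.eq_not.2 (hb _)]

lemma exists_periodic_of_forall_periodic_comp {A : Type*} [Finite A] (c : ℤ × ℤ → A)
    (h : ∀ π : A → Bool, Surjective π → ∃ t ≠ 0, Periodic (π ∘ c) t) :
    ∃ t ≠ 0, Periodic c t := by
  classical
  have h' (π : A → Bool) : ∃ t ≠ 0, Periodic (π ∘ c) t :=
    (em (Surjective π)).elim (h π) (exists_periodic_comp_of_not_surjective c)
  let χ (a : A) : ℤ × ℤ → Bool := (fun z => decide (z = a)) ∘ c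
  choose T hT0 hT using fun a => h' fun z => decide (z = a)
  by_cases hpar : ∀ a b, ¬IsDoublyPeriodic (χ a) → ¬IsDoublyPeriodic (χ b) →
      cross (T a) (T b) = 0
  · obtain ⟨s, hs0, hs⟩ := exists_forall_periodic χ hT0 hT hpar
    exact ⟨s, hs0, fun u => by simpa [χ] using hs (c u) u⟩
  · push Not at hpar
    obtain ⟨a, b, ha, hb, hab⟩ := hpar
    have hne : a ≠ b := by
      rintro rfl
      exact hab (cross_self _)
    obtain ⟨t, ht0, ht⟩ := h' fun z => decide (z = a) || decide (z = b)
    refine (not_periodic_or (f := χ a) (g := χ b) (fun x => ?_) ha hb (hT a) (hT b) hab ht0 ht).elim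
    simp only [χ, comp_apply, Bool.and_eq_false_iff, decide_eq_false_iff_not]
    by_cases hx : c x = a
    · exact Or.inr (hx ▸ hne)
    · exact Or.inl hx

section Patterns

variable {G X Y : Type*} [Add G]

def patterns (c : G → X) (D : Finset G) : Set (D → X) :=
  {p | ∃ v, ∀ u, p u = c (v + u.1)}

lemma patterns_comp (π : X → Y) (c : G → X) (D : Finset G) :
    patterns (π ∘ c) D = (π ∘ ·) '' patterns c D := by
  ext p
  constructor
  · rintro ⟨v, hv⟩
    exact ⟨fun u => c (v + u.1), ⟨v, fun _ => rfl⟩, funext fun u => (hv u).symm⟩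
  · rintro ⟨q, ⟨v, hv⟩, rfl⟩
    exact ⟨v, fun u => congrArg π (hv u)⟩

lemma ncard_patterns_comp_le [Finite X] (π : X → Y) (c : G → X) (D : Finset G) :
    (patterns (π ∘ c) D).ncard ≤ (patterns c D).ncard := by
  rw [patterns_comp]
  exact Set.ncard_image_le (Set.toFinite _)

end Patterns

end Configuration

/-- Letters of a non-periodic configuration over a finite alphabet can be merged
into two classes keeping non-periodicity, without increasing pattern complexity. -/
theorem stmt_19 {A : Type} [Fintype A] (c : ℤ × ℤ → A)
    (hnp : ¬ ∃ t : ℤ × ℤ, t ≠ 0 ∧ ∀ u, c (u + t) = c u) :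
    ∃ π : A → Bool, Function.Surjective π ∧
      (¬ ∃ t : ℤ × ℤ, t ≠ 0 ∧ ∀ u, (π ∘ c) (u + t) = (π ∘ c) u) ∧
      ∀ D : Finset (ℤ × ℤ),
        {p : {u // u ∈ D} → Bool | ∃ v : ℤ × ℤ, ∀ u, p u = π (c (v + u.1))}.ncard ≤
          {p : {u // u ∈ D} → A | ∃ v : ℤ × ℤ, ∀ u, p u = c (v + u.1)}.ncard := by
  obtain ⟨π, hπ, hπc⟩ : ∃ π : A → Bool, Surjective π ∧ ¬∃ t ≠ 0, Periodic (π ∘ c) t := by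
    by_contra! h
    exact hnp (Configuration.exists_periodic_of_forall_periodic_comp c h)
  exact ⟨π, hπ, hπc, Configuration.ncard_patterns_comp_le π c⟩
end
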